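/- Let n ≥ 4 and let P be the n×n pentadiagonal matrix over a field F with diagonal entries d₁,…,dₙ, first superdiagonal a₁,…,aₙ₋₁, second superdiagonal b₁,…,bₙ₋₂, first subdiagonal c₂,…,cₙ, second subdiagonal e₃,…,eₙ, and all other entries zero. Define μ, α, β, γ by the PTRANS-I recurrences and ψ, σ, φ, ρ by the PTRANS-II recurrences (as in the PTRANS-I and PTRANS-II algorithms). If μᵢ ≠ 0 for i = 1,…,n−1 and ψᵢ ≠ 0 for i = 2,…,n, then μ₁·μ₂·⋯·μₙ = ψ₁·ψ₂·⋯·ψₙ. -/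

import Mathlib

open Matrix

lemma sum_if_shift {n : ℕ} {F : Type*} [AddCommMonoid F] (t s : ℕ) (f : Fin n → F) :
    (∑ k : Fin n, if t = (k : ℕ) + s then f k else 0)
      = if h : s ≤ t ∧ t - s < n then f ⟨t - s, h.2⟩ else 0 := by
  split_ifs with h
  · rw [Finset.sum_eq_single (⟨t - s, h.2⟩ : Fin n)]
    · rw [if_pos (show _ by simp only [Fin.val_mk]; omega)]
    · intro k _ hk
      rw [if_neg]
      intro hc
      exact hk (Fin.ext (by simp only [Fin.val_mk]; omega))
    · intro h'; exact absurd (Finset.mem_univ _) h'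
  · apply Finset.sum_eq_zero
    intro k _
    rw [if_neg]
    have := k.isLt
    omega

set_option maxHeartbeats 2000000 in
lemma ptransI_det {F : Type*} [Field F] (n : ℕ) (hn : 4 ≤ n)
    (d a b c e : ℕ → F)
    (P : Matrix (Fin n) (Fin n) F)
    (hP : ∀ i j : Fin n,
      P i j =
        if (j : ℕ) = (i : ℕ) + 1 then a ((i : ℕ) + 1)
        else if (j : ℕ) = (i : ℕ) + 2 then b ((i : ℕ) + 1)
        else if (i : ℕ) = (j : ℕ) + 1 then c ((i : ℕ) + 1)
        else if (i : ℕ) = (j : ℕ) + 2 then e ((i : ℕ) + 1)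
        else if (i : ℕ) = (j : ℕ) then d ((i : ℕ) + 1)
        else 0)
    (μ α β γ : ℕ → F)
    (hμ1 : μ 1 = d 1) (hα1 : α 1 = a 1 / μ 1) (hβ1 : β 1 = b 1 / μ 1)
    (hγ2 : γ 2 = c 2) (hμ2 : μ 2 = d 2 - α 1 * γ 2)
    (hα2 : α 2 = (a 2 - β 1 * γ 2) / μ 2) (hβ2 : β 2 = b 2 / μ 2)
    (hγ : ∀ i, 3 ≤ i → i ≤ n → γ i = c i - α (i - 2) * e i)
    (hμr : ∀ i, 3 ≤ i → i ≤ n → μ i = d i - β (i - 2) * e i - α (i - 1) * γ i)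
    (hαr : ∀ i, 3 ≤ i → i ≤ n - 1 → α i = (a i - β (i - 1) * γ i) / μ i)
    (hβr : ∀ i, 3 ≤ i → i ≤ n - 2 → β i = b i / μ i)
    (hμne : ∀ i, 1 ≤ i → i ≤ n - 1 → μ i ≠ 0) :
    P.det = ∏ i ∈ Finset.Icc 1 n, μ i := by
  classical
  set L : Matrix (Fin n) (Fin n) F := Matrix.of (fun i j =>
    if (i : ℕ) = (j : ℕ) + 0 then 1
    else if (i : ℕ) = (j : ℕ) + 1 then γ ((i : ℕ) + 1) / μ (i : ℕ)
    else if (i : ℕ) = (j : ℕ) + 2 then e ((i : ℕ) + 1) / μ ((i : ℕ) - 1)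
    else 0) with hL
  set U : Matrix (Fin n) (Fin n) F := Matrix.of (fun i j =>
    if (i : ℕ) = (j : ℕ) then μ ((i : ℕ) + 1)
    else if (j : ℕ) = (i : ℕ) + 1 then μ ((i : ℕ) + 1) * α ((i : ℕ) + 1)
    else if (j : ℕ) = (i : ℕ) + 2 then μ ((i : ℕ) + 1) * β ((i : ℕ) + 1)
    else 0) with hU
  have hPLU : P = L * U := by
    ext i j
    rw [Matrix.mul_apply]
    have hsplit : ∀ k : Fin n, L i k * U k j =
        (if (i : ℕ) = (k : ℕ) + 0 then U k j else 0)
      + (if (i : ℕ) = (k : ℕ) + 1 then (γ ((i : ℕ) + 1) / μ (i : ℕ)) * U k j else 0)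
      + (if (i : ℕ) = (k : ℕ) + 2 then (e ((i : ℕ) + 1) / μ ((i : ℕ) - 1)) * U k j else 0) := by
      intro k
      simp only [hL, Matrix.of_apply]
      split_ifs <;> first | omega | ring
    rw [Finset.sum_congr rfl (fun k _ => hsplit k), Finset.sum_add_distrib,
      Finset.sum_add_distrib, sum_if_shift, sum_if_shift, sum_if_shift, hP]
    have hin : (i : ℕ) < n := i.isLt
    have hjn : (j : ℕ) < n := j.isLt
    rw [dif_pos (show 0 ≤ (i : ℕ) ∧ (i : ℕ) - 0 < n by omega)]
    by_cases h2 : 2 ≤ (i : ℕ)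
    · obtain ⟨m, hm⟩ : ∃ m, (i : ℕ) = m + 2 := ⟨(i : ℕ) - 2, by omega⟩
      rw [dif_pos (show 1 ≤ (i : ℕ) ∧ (i : ℕ) - 1 < n by omega),
        dif_pos (show 2 ≤ (i : ℕ) ∧ (i : ℕ) - 2 < n by omega)]
      simp only [hU, Matrix.of_apply, hm, Fin.val_mk]
      have E0 : m + 2 - 0 = m + 2 := by omega
      have E1 : m + 2 - 1 = m + 1 := by omega
      have E2 : m + 2 - 2 = m := by omega
      simp only [E0, E1, E2]
      have hne2 : μ (m + 2) ≠ 0 := hμne (m + 2) (by omega) (by omega)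
      have hne1 : μ (m + 1) ≠ 0 := hμne (m + 1) (by omega) (by omega)
      split_ifs <;>
        first
          | omega
          | (rw [hβr (m + 3) (by omega) (by omega)];
             have h3 : μ (m + 3) ≠ 0 := hμne (m + 3) (by omega) (by omega); field_simp <;> ring)
          | (rw [hαr (m + 3) (by omega) (by omega), show m + 3 - 1 = m + 2 from by omega];
             have h3 : μ (m + 3) ≠ 0 := hμne (m + 3) (by omega) (by omega); field_simp; ring)
          | (rw [hμr (m + 3) (by omega) (by omega),
               show m + 3 - 2 = m + 1 from by omega, show m + 3 - 1 = m + 2 from by omega];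
             field_simp; ring)
          | (rw [hγ (m + 3) (by omega) (by omega), show m + 3 - 2 = m + 1 from by omega];
             field_simp; ring)
          | (field_simp <;> ring)
          | ring
    · by_cases h1 : 1 ≤ (i : ℕ)
      · have hm : (i : ℕ) = 1 := by omega
        rw [dif_pos (show 1 ≤ (i : ℕ) ∧ (i : ℕ) - 1 < n by omega),
          dif_neg (show ¬(2 ≤ (i : ℕ) ∧ (i : ℕ) - 2 < n) by omega)]
        simp only [hU, Matrix.of_apply, hm, Fin.val_mk]
        have hne1 : μ 1 ≠ 0 := hμne 1 (by omega) (by omega)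
        have hne2 : μ 2 ≠ 0 := hμne 2 (by omega) (by omega)
        norm_num
        split_ifs <;>
          first
            | omega
            | (rw [hβ2]; field_simp <;> ring)
            | (rw [hα2]; field_simp; ring)
            | (rw [hμ2]; field_simp; ring)
            | (rw [← hγ2]; field_simp <;> ring)
            | (field_simp <;> ring)
            | ring
      · have hm : (i : ℕ) = 0 := by omega
        rw [dif_neg (show ¬(1 ≤ (i : ℕ) ∧ (i : ℕ) - 1 < n) by omega),
          dif_neg (show ¬(2 ≤ (i : ℕ) ∧ (i : ℕ) - 2 < n) by omega)]
        simp only [hU, Matrix.of_apply, hm, Fin.val_mk]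
        have hne1 : μ 1 ≠ 0 := hμne 1 (by omega) (by omega)
        norm_num
        split_ifs <;>
          first
            | omega
            | (rw [hβ1]; field_simp)
            | (rw [hα1]; field_simp)
            | (rw [hμ1])
            | field_simp
            | ring
  have hdetL : L.det = 1 := by
    rw [Matrix.det_of_lowerTriangular L (by
      intro p q hpq
      have hlt : (p : ℕ) < (q : ℕ) := hpq
      simp only [hL, Matrix.of_apply]
      rw [if_neg (by omega), if_neg (by omega), if_neg (by omega)])]
    apply Finset.prod_eq_one
    intro p _
    simp only [hL, Matrix.of_apply]
    rw [if_pos (by omega)]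
  have hdetU : U.det = ∏ p : Fin n, μ ((p : ℕ) + 1) := by
    rw [Matrix.det_of_upperTriangular (by
      intro p q hpq
      have hlt : (q : ℕ) < (p : ℕ) := hpq
      simp only [hU, Matrix.of_apply]
      rw [if_neg (by omega), if_neg (by omega), if_neg (by omega)])]
    apply Finset.prod_congr rfl
    intro p _
    simp [hU]
  rw [hPLU, Matrix.det_mul, hdetL, hdetU, one_mul]
  rw [Fin.prod_univ_eq_prod_range (fun p => μ (p + 1)) n]
  rw [show Finset.Icc 1 n = Finset.Ico 1 (n + 1) from by rw [Finset.Ico_add_one_right_eq_Icc]]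
  rw [Finset.prod_Ico_eq_prod_range]
  simp only [Nat.add_sub_cancel]
  exact Finset.prod_congr rfl fun i _ => by rw [Nat.add_comm]

set_option maxHeartbeats 4000000 in
theorem stmt_13 {F : Type*} [Field F] (n : ℕ) (hn : 4 ≤ n)
    (d a b c e : ℕ → F)
    (P : Matrix (Fin n) (Fin n) F)
    (hP : ∀ i j : Fin n,
      P i j =
        if (j : ℕ) = (i : ℕ) + 1 then a ((i : ℕ) + 1)
        else if (j : ℕ) = (i : ℕ) + 2 then b ((i : ℕ) + 1)
        else if (i : ℕ) = (j : ℕ) + 1 then c ((i : ℕ) + 1)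
        else if (i : ℕ) = (j : ℕ) + 2 then e ((i : ℕ) + 1)
        else if (i : ℕ) = (j : ℕ) then d ((i : ℕ) + 1)
        else 0)
    (μ α β γ : ℕ → F)
    (hμ1 : μ 1 = d 1) (hα1 : α 1 = a 1 / μ 1) (hβ1 : β 1 = b 1 / μ 1)
    (hγ2 : γ 2 = c 2) (hμ2 : μ 2 = d 2 - α 1 * γ 2)
    (hα2 : α 2 = (a 2 - β 1 * γ 2) / μ 2) (hβ2 : β 2 = b 2 / μ 2)
    (hγ : ∀ i, 3 ≤ i → i ≤ n → γ i = c i - α (i - 2) * e i)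
    (hμr : ∀ i, 3 ≤ i → i ≤ n → μ i = d i - β (i - 2) * e i - α (i - 1) * γ i)
    (hαr : ∀ i, 3 ≤ i → i ≤ n - 1 → α i = (a i - β (i - 1) * γ i) / μ i)
    (hβr : ∀ i, 3 ≤ i → i ≤ n - 2 → β i = b i / μ i)
    (hμne : ∀ i, 1 ≤ i → i ≤ n - 1 → μ i ≠ 0)
    (ψ σ φ ρ : ℕ → F)
    (hψn : ψ n = d n) (hσn : σ n = c n / ψ n) (hφn : φ n = e n / ψ n)
    (hρn1 : ρ (n - 1) = a (n - 1))
    (hψn1 : ψ (n - 1) = d (n - 1) - σ n * ρ (n - 1))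
    (hσn1 : σ (n - 1) = (c (n - 1) - φ n * ρ (n - 1)) / ψ (n - 1))
    (hφn1 : φ (n - 1) = e (n - 1) / ψ (n - 1))
    (hρr : ∀ i, 1 ≤ i → i ≤ n - 2 → ρ i = a i - σ (i + 2) * b i)
    (hψr : ∀ i, 1 ≤ i → i ≤ n - 2 → ψ i = d i - φ (i + 2) * b i - σ (i + 1) * ρ i)
    (hσr : ∀ i, 2 ≤ i → i ≤ n - 2 → σ i = (c i - φ (i + 1) * ρ i) / ψ i)
    (hφr : ∀ i, 3 ≤ i → i ≤ n - 2 → φ i = e i / ψ i)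
    (hψne : ∀ i, 2 ≤ i → i ≤ n → ψ i ≠ 0)
    : ∏ i ∈ Finset.Icc 1 n, μ i = ∏ i ∈ Finset.Icc 1 n, ψ i := by
  have h1 : P.det = ∏ i ∈ Finset.Icc 1 n, μ i :=
    ptransI_det n hn d a b c e P hP μ α β γ hμ1 hα1 hβ1 hγ2 hμ2 hα2 hβ2 hγ hμr hαr hβr hμne
  have A1 : n + 1 - 1 = n := by omega
  have A2 : n + 1 - 2 = n - 1 := by omega
  have hQ : ∀ i j : Fin n,
      (P.submatrix ⇑Fin.revPerm ⇑Fin.revPerm) i j =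
        if (j : ℕ) = (i : ℕ) + 1 then c (n + 1 - ((i : ℕ) + 1))
        else if (j : ℕ) = (i : ℕ) + 2 then e (n + 1 - ((i : ℕ) + 1))
        else if (i : ℕ) = (j : ℕ) + 1 then a (n + 1 - ((i : ℕ) + 1))
        else if (i : ℕ) = (j : ℕ) + 2 then b (n + 1 - ((i : ℕ) + 1))
        else if (i : ℕ) = (j : ℕ) then d (n + 1 - ((i : ℕ) + 1))
        else 0 := by
    intro i j
    have hi := i.isLt
    have hj := j.isLt
    rw [Matrix.submatrix_apply, hP]
    have hri : ((Fin.revPerm i : Fin n) : ℕ) = n - 1 - (i : ℕ) := by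
      rw [Fin.revPerm_apply, Fin.val_rev]; omega
    have hrj : ((Fin.revPerm j : Fin n) : ℕ) = n - 1 - (j : ℕ) := by
      rw [Fin.revPerm_apply, Fin.val_rev]; omega
    rw [hri, hrj]
    split_ifs <;> first | rfl | omega | (congr 1; omega)
  have hμ1' : ψ (n + 1 - 1) = d (n + 1 - 1) := by rw [A1]; exact hψn
  have hα1' : σ (n + 1 - 1) = c (n + 1 - 1) / ψ (n + 1 - 1) := by rw [A1]; exact hσn
  have hβ1' : φ (n + 1 - 1) = e (n + 1 - 1) / ψ (n + 1 - 1) := by rw [A1]; exact hφn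
  have hγ2' : ρ (n + 1 - 2) = a (n + 1 - 2) := by rw [A2]; exact hρn1
  have hμ2' : ψ (n + 1 - 2) = d (n + 1 - 2) - σ (n + 1 - 1) * ρ (n + 1 - 2) := by
    rw [A1, A2]; exact hψn1
  have hα2' : σ (n + 1 - 2) = (c (n + 1 - 2) - φ (n + 1 - 1) * ρ (n + 1 - 2)) / ψ (n + 1 - 2) := by
    rw [A1, A2]; exact hσn1
  have hβ2' : φ (n + 1 - 2) = e (n + 1 - 2) / ψ (n + 1 - 2) := by rw [A2]; exact hφn1
  have hγ' : ∀ i, 3 ≤ i → i ≤ n →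
      ρ (n + 1 - i) = a (n + 1 - i) - σ (n + 1 - (i - 2)) * b (n + 1 - i) := by
    intro i h3 hle
    rw [show n + 1 - (i - 2) = (n + 1 - i) + 2 from by omega]
    exact hρr (n + 1 - i) (by omega) (by omega)
  have hμr' : ∀ i, 3 ≤ i → i ≤ n →
      ψ (n + 1 - i) = d (n + 1 - i) - φ (n + 1 - (i - 2)) * b (n + 1 - i)
        - σ (n + 1 - (i - 1)) * ρ (n + 1 - i) := by
    intro i h3 hle
    rw [show n + 1 - (i - 2) = (n + 1 - i) + 2 from by omega,
      show n + 1 - (i - 1) = (n + 1 - i) + 1 from by omega]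
    exact hψr (n + 1 - i) (by omega) (by omega)
  have hαr' : ∀ i, 3 ≤ i → i ≤ n - 1 →
      σ (n + 1 - i) = (c (n + 1 - i) - φ (n + 1 - (i - 1)) * ρ (n + 1 - i)) / ψ (n + 1 - i) := by
    intro i h3 hle
    rw [show n + 1 - (i - 1) = (n + 1 - i) + 1 from by omega]
    exact hσr (n + 1 - i) (by omega) (by omega)
  have hβr' : ∀ i, 3 ≤ i → i ≤ n - 2 → φ (n + 1 - i) = e (n + 1 - i) / ψ (n + 1 - i) :=
    fun i h3 hle => hφr (n + 1 - i) (by omega) (by omega)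
  have hμne' : ∀ i, 1 ≤ i → i ≤ n - 1 → ψ (n + 1 - i) ≠ 0 :=
    fun i h1' hle => hψne (n + 1 - i) (by omega) (by omega)
  have h2 : (P.submatrix ⇑Fin.revPerm ⇑Fin.revPerm).det = ∏ i ∈ Finset.Icc 1 n, ψ (n + 1 - i) :=
    ptransI_det n hn (fun k => d (n + 1 - k)) (fun k => c (n + 1 - k)) (fun k => e (n + 1 - k))
      (fun k => a (n + 1 - k)) (fun k => b (n + 1 - k))
      (P.submatrix ⇑Fin.revPerm ⇑Fin.revPerm) hQ
      (fun k => ψ (n + 1 - k)) (fun k => σ (n + 1 - k)) (fun k => φ (n + 1 - k))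
      (fun k => ρ (n + 1 - k))
      hμ1' hα1' hβ1' hγ2' hμ2' hα2' hβ2' hγ' hμr' hαr' hβr' hμne'
  have h3 : (P.submatrix ⇑Fin.revPerm ⇑Fin.revPerm).det = P.det :=
    Matrix.det_submatrix_equiv_self Fin.revPerm P
  have h4 : ∏ i ∈ Finset.Icc 1 n, ψ (n + 1 - i) = ∏ i ∈ Finset.Icc 1 n, ψ i := by
    apply Finset.prod_nbij' (fun k => n + 1 - k) (fun k => n + 1 - k)
    · intro x hx; simp only [Finset.mem_Icc] at *; omega
    · intro x hx; simp only [Finset.mem_Icc] at *; omega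
    · intro x hx; simp only [Finset.mem_Icc] at *; omega
    · intro x hx; simp only [Finset.mem_Icc] at *; omega
    · intro x hx; rfl
  rw [← h1, ← h3, h2, h4]
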